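/- arXiv:1610.07199 — 15 statements merged into one kernel-verified Lean document; each statement's English description precedes it below -/
import Mathlib

section
/- For the sequence defined by the recurrence x_{n+3} x_n = x_{n+2} x_{n+1} + a(x_{n+1} + x_{n+2}) (the k=1 Heideman–Hogan recurrence) with nonzero initial values x_0, x_1, x_2 and nonzero parameter a, the quantity K = 1 + x_0/x_2 + x_2/x_0 + a((1 + x_2/x_0)(x_0+x_1)/(x_1 x_2) + (1 + x_0/x_2)(x_1+x_2)/(x_0 x_1)) + a^2(1/(x_1 x_2) + (1/x_0)(1/x_1 + 1/x_2)) is a conserved quantity: it takes the same value when computed from (x_1, x_2, x_3) as from (x_0, x_1, x_2). -/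
/-!
Clearing denominators, `x₀x₁x₂ K(x₀, x₁, x₂)` is the polynomial
`x₁(x₀² + x₀x₂ + x₂²) + a(x₀ + x₂)(x₀ + 2x₁ + x₂) + a²(x₀ + x₁ + x₂)`, and the difference
`K(x₁, x₂, x₃) - K(x₀, x₁, x₂)` factors as
`(x₃x₀ - x₂x₁ - a(x₁ + x₂)) (x₂x₃ - x₀x₁ + a(x₃ - x₀)) / (x₀x₁x₂x₃)`,
whose first factor vanishes by the recurrence.
-/

/-- The conserved quantity `K` for the k=1 Heideman–Hogan recurrence,
computed from three consecutive terms `x0, x1, x2` and the parameter `a`. -/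
def heihoK {F : Type*} [Field F] (a x0 x1 x2 : F) : F :=
  1 + x0 / x2 + x2 / x0
    + a * ((1 + x2 / x0) * (x0 + x1) / (x1 * x2)
        + (1 + x0 / x2) * (x1 + x2) / (x0 * x1))
    + a ^ 2 * (1 / (x1 * x2) + (1 / x0) * (1 / x1 + 1 / x2))

section

variable {F : Type*} [Field F] {a A B C D : F}

theorem mul_heihoK (hA : A ≠ 0) (hB : B ≠ 0) (hC : C ≠ 0) :
    A * B * C * heihoK a A B C =
      B * (A ^ 2 + A * C + C ^ 2) + a * (A + C) * (A + 2 * B + C) + a ^ 2 * (A + B + C) := by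
  unfold heihoK
  field_simp
  ring

theorem heihoK_shift_sub (hA : A ≠ 0) (hB : B ≠ 0) (hC : C ≠ 0) (hD : D ≠ 0) :
    heihoK a B C D - heihoK a A B C =
      (D * A - C * B - a * (B + C)) * (C * D - A * B + a * (D - A)) / (A * B * C * D) := by
  rw [eq_div_iff (by positivity)]
  linear_combination A * mul_heihoK (a := a) hB hC hD - D * mul_heihoK (a := a) hA hB hC

theorem heihoK_shift_eq (hA : A ≠ 0) (hB : B ≠ 0) (hC : C ≠ 0) (hD : D ≠ 0)
    (hrec : D * A = C * B + a * (B + C)) :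
    heihoK a B C D = heihoK a A B C := by
  rw [← sub_eq_zero, heihoK_shift_sub hA hB hC hD, hrec]
  ring

end

theorem heihoK_conserved_general {F : Type*} [Field F] (a : F)
    (x : ℤ → F) (hnz : ∀ n, x n ≠ 0)
    (hrec : ∀ n : ℤ, x (n + 3) * x n = x (n + 2) * x (n + 1) + a * (x (n + 1) + x (n + 2))) :
    heihoK a (x 1) (x 2) (x 3) = heihoK a (x 0) (x 1) (x 2) :=
  heihoK_shift_eq (hnz 0) (hnz 1) (hnz 2) (hnz 3) (by simpa using hrec 0)

theorem heihoK_conserved {F : Type*} [Field F] (a : F) (ha : a ≠ 0)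
    (x : ℤ → F) (hnz : ∀ n, x n ≠ 0)
    (hrec : ∀ n : ℤ, x (n + 3) * x n = x (n + 2) * x (n + 1) + a * (x (n + 1) + x (n + 2))) :
    heihoK a (x 1) (x 2) (x 3) = heihoK a (x 0) (x 1) (x 2) :=
  heihoK_conserved_general a x hnz hrec
end

section
/- The terms of the sequence generated by the recurrence x_{n+2k+1} x_n = x_{n+2k} x_{n+1} + x_{n+k} + x_{n+k+1} with all initial values x_0 = x_1 = ... = x_{2k} = 1 satisfy the linear relation x_{n+6k} - (2k^2 + 8k + 4)(x_{n+4k} - x_{n+2k}) - x_n = 0 for all n ≥ 0. (One may take k = 1, i.e. the recurrence x_{n+3} x_n = x_{n+2} x_{n+1} + x_{n+1} + x_{n+2} with x_0 = x_1 = x_2 = 1, in which case the relation is x_{n+6} - 14(x_{n+4} - x_{n+2}) - x_n = 0.) -/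
/-! Write `R n` for the residual of the recurrence at `n` and `L n` for that of the linear relation
`x (n + 6k) = c (x (n + 4k) - x (n + 2k)) + x n`. For every constant `c` and every sequence, a ring
identity expresses `x (n + 6k) * L (n + 2k + 1)` through `R` at `n, n + 2k, n + 4k, n + 6k` and `L` at
`n, n + 1, n + k, n + k + 1, n + 2k`. For a solution with nonzero terms and `k > 0`, the relation therefore
holds everywhere as soon as it holds for `n ≤ 2k`. With all initial values `1` the first `8k + 1` terms
can be computed exactly: on each block `a k ≤ n ≤ (a + 1) k` they are quadratic in `n - a k`, and the
relation for `n ≤ 2k`, with `c = 2k² + 8k + 4`, becomes a polynomial identity. -/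

section Residuals

variable {R : Type*} [CommRing R]

def recResidual (k : ℕ) (x : ℕ → R) (n : ℕ) : R :=
  x (n + 2 * k + 1) * x n - (x (n + 2 * k) * x (n + 1) + x (n + k) + x (n + k + 1))

def linResidual (c : R) (k : ℕ) (x : ℕ → R) (n : ℕ) : R :=
  x (n + 6 * k) - c * (x (n + 4 * k) - x (n + 2 * k)) - x n

theorem mul_linResidual_eq (c : R) (k : ℕ) (x : ℕ → R) (n : ℕ) :
    x (n + 6 * k) * linResidual c k x (n + 2 * k + 1) =
      recResidual k x (n + 6 * k) - c * recResidual k x (n + 4 * k)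
        + c * recResidual k x (n + 2 * k) - recResidual k x n
        + x (n + 6 * k + 1) * linResidual c k x (n + 2 * k)
        + linResidual c k x (n + k) + linResidual c k x (n + k + 1)
        - x (n + 2 * k + 1) * linResidual c k x n + x (n + 2 * k) * linResidual c k x (n + 1) := by
  simp only [recResidual, linResidual]
  ring_nf

end Residuals

section Propagation

variable {R : Type*} [CommRing R] [IsDomain R]

theorem linResidual_eq_zero {k : ℕ} (hk : 0 < k) {x : ℕ → R} (hnz : ∀ n, x n ≠ 0)
    (hrec : ∀ n, recResidual k x n = 0) (c : R)
    (hbase : ∀ n ≤ 2 * k, linResidual c k x n = 0) (n : ℕ) : linResidual c k x n = 0 := by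
  induction n using Nat.strong_induction_on with
  | _ n ih =>
    rcases le_or_gt n (2 * k) with hn | hn
    · exact hbase n hn
    obtain ⟨j, rfl⟩ : ∃ j, n = j + 2 * k + 1 := ⟨n - (2 * k + 1), by omega⟩
    apply (mul_eq_zero.mp ?_).resolve_left (hnz (j + 6 * k))
    rw [mul_linResidual_eq]
    simp only [hrec, ih (j + 2 * k) (by omega), ih (j + k) (by omega), ih (j + k + 1) (by omega),
      ih j (by omega), ih (j + 1) (by omega)]
    ring

theorem eq_on_next_block {k a : ℕ} {x : ℕ → R} (hrec : ∀ n, recResidual k x n = 0)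
    {p q r : ℕ → R} (hp : ∀ i ≤ k, x (a * k + i) = p i) (hq : ∀ i ≤ k, x ((a + 1) * k + i) = q i)
    (hpne : ∀ i < k, p i ≠ 0) (hr₀ : r 0 = q k)
    (hpqr : ∀ i < k, r (i + 1) * p i = r i * p (i + 1) + q i + q (i + 1)) :
    ∀ i ≤ k, x ((a + 2) * k + i) = r i := by
  intro i
  induction i with
  | zero =>
    intro _
    rw [hr₀, ← hq k le_rfl]
    ring_nf
  | succ i ih =>
    intro hi
    have h := sub_eq_zero.mp (hrec (a * k + i))
    rw [show a * k + i + 2 * k + 1 = (a + 2) * k + (i + 1) by ring,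
      show a * k + i + 2 * k = (a + 2) * k + i by ring,
      show a * k + i + k + 1 = (a + 1) * k + (i + 1) by ring,
      show a * k + i + k = (a + 1) * k + i by ring,
      show a * k + i + 1 = a * k + (i + 1) by ring,
      hp i (by omega), hp (i + 1) hi, hq i (by omega), hq (i + 1) hi, ih (by omega)] at h
    apply mul_right_cancel₀ (hpne i (by omega))
    rw [h, hpqr i hi]

end Propagation

def onesBlock (k : ℕ) : ℕ → ℕ → ℚ
  | 0, _ => 1
  | 1, _ => 1
  | 2, i => 2 * i + 1
  | 3, i => 2 * i ^ 2 + 2 * i + 2 * k + 1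
  | 4, i => 2 * i ^ 2 + (4 * k ^ 2 + 12 * k + 6) * i + 2 * k ^ 2 + 4 * k + 1
  | 5, i => (4 * k ^ 2 + 16 * k + 8) * i ^ 2 + (4 * k ^ 2 + 16 * k + 6) * i
      + 4 * k ^ 3 + 16 * k ^ 2 + 10 * k + 1
  | 6, i => (4 * k ^ 2 + 16 * k + 8) * i ^ 2
      + (8 * k ^ 4 + 56 * k ^ 3 + 120 * k ^ 2 + 80 * k + 16) * i
      + 4 * k ^ 4 + 24 * k ^ 3 + 40 * k ^ 2 + 16 * k + 1
  | 7, i => (8 * k ^ 4 + 64 * k ^ 3 + 156 * k ^ 2 + 112 * k + 24) * i ^ 2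
      + (8 * k ^ 4 + 64 * k ^ 3 + 152 * k ^ 2 + 96 * k + 16) * i
      + 8 * k ^ 5 + 64 * k ^ 4 + 160 * k ^ 3 + 128 * k ^ 2 + 32 * k + 1
  | _, _ => 0

section Ones

variable {k : ℕ} {x : ℕ → ℚ}

theorem eq_onesBlock (hinit : ∀ j ≤ 2 * k, x j = 1) (hrec : ∀ n, recResidual k x n = 0) :
    ∀ a ≤ 7, ∀ i ≤ k, x (a * k + i) = onesBlock k a i := by
  intro a
  induction a using Nat.strong_induction_on with
  | _ a ih =>
    match a with
    | 0 => intro _ i hi; simpa [onesBlock] using hinit i (by omega)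
    | 1 => intro _ i hi; simpa [onesBlock] using hinit (k + i) (by omega)
    | a + 2 =>
      intro ha
      have ha' : a ≤ 5 := by omega
      refine eq_on_next_block hrec (ih a (by omega) (by omega)) (ih (a + 1) (by omega) (by omega))
        ?_ ?_ ?_
      · intro i _
        interval_cases a <;> simp only [onesBlock] <;> positivity
      · interval_cases a <;> simp only [onesBlock] <;> push_cast <;> ring
      · intro i _
        interval_cases a <;> simp only [onesBlock] <;> push_cast <;> ring

theorem linResidual_ones_of_le (hinit : ∀ j ≤ 2 * k, x j = 1) (hrec : ∀ n, recResidual k x n = 0) :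
    ∀ n ≤ 2 * k, linResidual (2 * (k : ℚ) ^ 2 + 8 * k + 4) k x n = 0 := by
  have hblock := eq_onesBlock hinit hrec
  intro n hn
  rcases le_or_gt n k with h | h
  · rw [linResidual, show n + 6 * k = 6 * k + n by ring, show n + 4 * k = 4 * k + n by ring,
      show n + 2 * k = 2 * k + n by ring, hblock 6 (by norm_num) n h, hblock 4 (by norm_num) n h,
      hblock 2 (by norm_num) n h, hinit n (by omega)]
    simp only [onesBlock]
    ring
  · obtain ⟨i, rfl⟩ : ∃ i, n = k + i := ⟨n - k, by omega⟩
    rw [linResidual, show k + i + 6 * k = 7 * k + i by ring, show k + i + 4 * k = 5 * k + i by ring,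
      show k + i + 2 * k = 3 * k + i by ring, hblock 7 (by norm_num) i (by omega),
      hblock 5 (by norm_num) i (by omega), hblock 3 (by norm_num) i (by omega),
      hinit (k + i) (by omega)]
    simp only [onesBlock]
    ring

end Ones

theorem heiho_ones_linear (k : ℕ) (hk : 0 < k) (x : ℕ → ℚ)
    (hinit : ∀ j ≤ 2 * k, x j = 1)
    (hnz : ∀ n, x n ≠ 0)
    (hrec : ∀ n, x (n + 2 * k + 1) * x n =
      x (n + 2 * k) * x (n + 1) + x (n + k) + x (n + k + 1)) :
    ∀ n, x (n + 6 * k) - (2 * (k : ℚ) ^ 2 + 8 * k + 4) * (x (n + 4 * k) - x (n + 2 * k))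
      - x n = 0 := by
  have hres : ∀ n, recResidual k x n = 0 := fun n => sub_eq_zero.mpr (hrec n)
  exact linResidual_eq_zero hk hnz hres _ (linResidual_ones_of_le hinit hres)
end

section
/- The sequence generated by x_{n+3} x_n = x_{n+2} x_{n+1} + x_{n+1} + x_{n+2} with x_0 = x_1 = x_2 = 1 consists entirely of positive integers. -/
/-!
The recurrence linearises: its solution also satisfies `x (n + 2) + x n + 1 = c n * x (n + 1)`
with `c n = 3` for even and `c n = 5` for odd `n`. The integer sequence defined by this linear
recurrence is increasing from `1` because `c n ≥ 3`. It satisfies the original recurrence because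
the quadratic form `heihoForm (c n) (c (n + 1))` vanishes on each pair of consecutive terms: read
as a quadratic in its first variable, the linear step replaces one root by the other (Vieta
jumping), and on the zero set of the form the original product identity is a ring identity.
A third-order recurrence has a unique solution, so `x` is this integer sequence.
-/

section Recurrence

variable {α : Type*} {x y : ℕ → α}

theorem eq_of_third_order_recurrence (F : α → α → α → α)
    (hx : ∀ n, x (n + 3) = F (x n) (x (n + 1)) (x (n + 2)))
    (hy : ∀ n, y (n + 3) = F (y n) (y (n + 1)) (y (n + 2)))
    (h0 : x 0 = y 0) (h1 : x 1 = y 1) (h2 : x 2 = y 2) : x = y := by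
  have h : ∀ n, x n = y n ∧ x (n + 1) = y (n + 1) ∧ x (n + 2) = y (n + 2) := by
    intro n
    induction n with
    | zero => exact ⟨h0, h1, h2⟩
    | succ n ih =>
      obtain ⟨e0, e1, e2⟩ := ih
      exact ⟨e1, e2, by rw [hx, hy, e0, e1, e2]⟩
  exact funext fun n => (h n).1

end Recurrence

section Form

variable {R : Type*} [CommRing R]

def heihoForm (a b p q : R) : R :=
  a * p ^ 2 + b * q ^ 2 - a * b * p * q + a * p + b * q - 1

theorem heihoForm_vieta (a b p q : R) :
    heihoForm b a q (b * q - p - 1) = heihoForm a b p q := by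
  unfold heihoForm; ring

theorem heihoForm_mul_eq (a b p q : R) :
    (a * p - q - 1) * (b * q - p - 1) = q * p + p + q - heihoForm a b p q := by
  unfold heihoForm; ring

end Form

def heihoCoeff (n : ℕ) : ℤ := if Even n then 3 else 5

theorem heihoCoeff_add_two (n : ℕ) : heihoCoeff (n + 2) = heihoCoeff n := by
  simp [heihoCoeff, Nat.even_add]

theorem three_le_heihoCoeff (n : ℕ) : 3 ≤ heihoCoeff n := by
  unfold heihoCoeff; split_ifs <;> norm_num

def heihoSeq : ℕ → ℤ
  | 0 => 1
  | 1 => 1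
  | n + 2 => heihoCoeff n * heihoSeq (n + 1) - heihoSeq n - 1

theorem heihoSeq_add_two (n : ℕ) :
    heihoSeq (n + 2) = heihoCoeff n * heihoSeq (n + 1) - heihoSeq n - 1 :=
  rfl

theorem heihoForm_heihoSeq (n : ℕ) :
    heihoForm (heihoCoeff n) (heihoCoeff (n + 1)) (heihoSeq (n + 1)) (heihoSeq (n + 2)) = 0 := by
  induction n with
  | zero => decide
  | succ n ih =>
    rw [heihoCoeff_add_two, heihoSeq_add_two (n + 1), heihoForm_vieta, ih]

theorem heihoSeq_recurrence (n : ℕ) :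
    heihoSeq (n + 3) * heihoSeq n =
      heihoSeq (n + 2) * heihoSeq (n + 1) + heihoSeq (n + 1) + heihoSeq (n + 2) := by
  have h0 : heihoSeq n = heihoCoeff n * heihoSeq (n + 1) - heihoSeq (n + 2) - 1 := by
    rw [heihoSeq_add_two]; ring
  rw [h0, heihoSeq_add_two (n + 1), mul_comm, heihoForm_mul_eq, heihoForm_heihoSeq, sub_zero]

theorem one_le_heihoSeq_and_le_succ (n : ℕ) :
    1 ≤ heihoSeq n ∧ heihoSeq n ≤ heihoSeq (n + 1) := by
  induction n with
  | zero => decide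
  | succ n ih =>
    obtain ⟨h1, hle⟩ := ih
    refine ⟨h1.trans hle, ?_⟩
    rw [heihoSeq_add_two]
    nlinarith [three_le_heihoCoeff n]

theorem heihoSeq_pos (n : ℕ) : 0 < heihoSeq n :=
  Int.one_pos.trans_le (one_le_heihoSeq_and_le_succ n).1

theorem heiho_ones_integrality (x : ℕ → ℚ)
    (h0 : x 0 = 1) (h1 : x 1 = 1) (h2 : x 2 = 1)
    (hrec : ∀ n, x (n + 3) = (x (n + 2) * x (n + 1) + x (n + 1) + x (n + 2)) / x n) :
    ∀ n, ∃ m : ℤ, 0 < m ∧ x n = m := by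
  have hseq : ∀ n, (heihoSeq (n + 3) : ℚ) =
      (heihoSeq (n + 2) * heihoSeq (n + 1) + heihoSeq (n + 1) + heihoSeq (n + 2)) / heihoSeq n := by
    intro n
    rw [eq_div_iff (by exact_mod_cast (heihoSeq_pos n).ne')]
    exact_mod_cast heihoSeq_recurrence n
  have hx : x = fun n => (heihoSeq n : ℚ) :=
    eq_of_third_order_recurrence (fun a b c => (c * b + b + c) / a) hrec hseq
      (by simp [h0, heihoSeq]) (by simp [h1, heihoSeq]) (by simp [h2, heihoSeq, heihoCoeff])
  exact fun n => ⟨heihoSeq n, heihoSeq_pos n, congrFun hx n⟩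
end

section
/- Let S denote the shift operator on sequences, S x_n = x_{n+1}, let ξ_n = x_n x_{n+2k+1} - x_{n+1} x_{n+2k} - a(x_{n+k} + x_{n+k+1}), and let L = S^{6k} - K(S^{4k} - S^{2k}) - 1 for a constant K. Then for any sequence (x_n) one has the operator identity L ξ_n = x_{n+6k}(Lx)_{n+2k+1} - x_{n+6k+1}(Lx)_{n+2k} - x_{n+2k}(Lx)_{n+1} + x_{n+2k+1}(Lx)_n - a((Lx)_{n+k+1} + (Lx)_{n+k}), where (Lx)_m = x_{m+6k} - K(x_{m+4k} - x_{m+2k}) - x_m. -/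
theorem heiho_operator_identity_general {R : Type*} [CommRing R] (k : ℕ)
    (a K : R) (x : ℤ → R) (ξ Lx : ℤ → R)
    (hξ : ∀ m : ℤ, ξ m = x m * x (m + 2 * k + 1) - x (m + 1) * x (m + 2 * k)
      - a * (x (m + k) + x (m + k + 1)))
    (hLx : ∀ m : ℤ, Lx m = x (m + 6 * k) - K * (x (m + 4 * k) - x (m + 2 * k)) - x m) :
    ∀ n : ℤ, ξ (n + 6 * k) - K * (ξ (n + 4 * k) - ξ (n + 2 * k)) - ξ n =
      x (n + 6 * k) * Lx (n + 2 * k + 1) - x (n + 6 * k + 1) * Lx (n + 2 * k)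
        - x (n + 2 * k) * Lx (n + 1) + x (n + 2 * k + 1) * Lx n
        - a * (Lx (n + k + 1) + Lx (n + k)) := by
  intro n
  simp only [hξ, hLx]
  ring_nf

theorem heiho_operator_identity {R : Type*} [CommRing R] (k : ℕ) (hk : 0 < k)
    (a K : R) (x : ℤ → R) (ξ Lx : ℤ → R)
    (hξ : ∀ m : ℤ, ξ m = x m * x (m + 2 * k + 1) - x (m + 1) * x (m + 2 * k)
      - a * (x (m + k) + x (m + k + 1)))
    (hLx : ∀ m : ℤ, Lx m = x (m + 6 * k) - K * (x (m + 4 * k) - x (m + 2 * k)) - x m) :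
    ∀ n : ℤ, ξ (n + 6 * k) - K * (ξ (n + 4 * k) - ξ (n + 2 * k)) - ξ n =
      x (n + 6 * k) * Lx (n + 2 * k + 1) - x (n + 6 * k + 1) * Lx (n + 2 * k)
        - x (n + 2 * k) * Lx (n + 1) + x (n + 2 * k + 1) * Lx n
        - a * (Lx (n + k + 1) + Lx (n + k)) :=
  heiho_operator_identity_general k a K x ξ Lx hξ hLx
end

section
/- The birational map φ(x_0, x_1, ..., x_{2k}) = (x_1, x_2, ..., x_{2k}, (x_1 x_{2k} + a(x_{k+1} + x_k))/x_0) is reversible: φ = σ ∘ φ^{-1} ∘ σ, where σ is the involution σ(x_0, x_1, ..., x_{2k}) = (x_{2k}, x_{2k-1}, ..., x_0). Equivalently, σ ∘ φ ∘ σ ∘ φ is the identity wherever defined. -/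
/-- The Heideman–Hogan birational map `φ` on `(2k+1)`-tuples (here with `k+1`
in place of `k`, so that `k+1` ranges over all positive integers):
`(x_0, …, x_{2k}) ↦ (x_1, …, x_{2k}, (x_1 x_{2k} + a(x_{k+1} + x_k))/x_0)`. -/
def hhPhi {F : Type*} [Field F] (k : ℕ) (a : F)
    (v : Fin (2 * (k + 1) + 1) → F) : Fin (2 * (k + 1) + 1) → F :=
  fun i => if h : (i : ℕ) < 2 * (k + 1) then v ⟨i + 1, by omega⟩
    else (v ⟨1, by omega⟩ * v ⟨2 * (k + 1), by omega⟩
        + a * (v ⟨(k + 1) + 1, by omega⟩ + v ⟨k + 1, by omega⟩)) / v ⟨0, by omega⟩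

/-- The reversal involution `σ(x_0, …, x_{2k}) = (x_{2k}, …, x_0)`. -/
def hhSigma {F : Type*} [Field F] (k : ℕ)
    (v : Fin (2 * (k + 1) + 1) → F) : Fin (2 * (k + 1) + 1) → F :=
  fun i => v ⟨2 * (k + 1) - i, by omega⟩

/-!
After one step of `φ`, the interior coordinates `x_1, …, x_{2k}` of `σ(φ x)` are those of `x`
in reverse order, and the numerator `N(x) = x_1 x_{2k} + a(x_{k+1} + x_k)` of `φ` is invariant under
this reversal. Hence the new coordinate produced by `φ(σ(φ x))` is `N/(N/x_0) = x_0`, so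
`φ ∘ σ ∘ φ = σ` and the claim follows since `σ` is an involution.
-/

section

variable {F : Type*} [Field F] (k : ℕ) (a : F)

def hhPhiNumerator (v : Fin (2 * (k + 1) + 1) → F) : F :=
  v ⟨1, by omega⟩ * v ⟨2 * (k + 1), Nat.lt_succ_self _⟩
    + a * (v ⟨(k + 1) + 1, by omega⟩ + v ⟨k + 1, by omega⟩)

theorem hhSigma_eq_comp_rev (v : Fin (2 * (k + 1) + 1) → F) : hhSigma k v = v ∘ Fin.rev := by
  funext i
  exact congrArg v (Fin.ext (by simp only [Fin.val_rev]; omega))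

theorem hhSigma_involutive : Function.Involutive (hhSigma (F := F) k) := fun v => by
  funext i
  simp only [hhSigma_eq_comp_rev, Function.comp_apply, Fin.rev_rev]

theorem hhPhi_castSucc (v : Fin (2 * (k + 1) + 1) → F) (i : Fin (2 * (k + 1))) :
    hhPhi k a v i.castSucc = v i.succ :=
  dif_pos i.isLt

theorem hhPhi_last (v : Fin (2 * (k + 1) + 1) → F) :
    hhPhi k a v (Fin.last _) = hhPhiNumerator k a v / v 0 :=
  dif_neg (lt_irrefl _)

theorem hhPhiNumerator_hhSigma_hhPhi (v : Fin (2 * (k + 1) + 1) → F) :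
    hhPhiNumerator k a (hhSigma k (hhPhi k a v)) = hhPhiNumerator k a v := by
  simp only [hhPhiNumerator, hhSigma, hhPhi]
  rw [dif_pos (by omega), dif_pos (by omega), dif_pos (by omega), dif_pos (by omega)]
  simp only [show 2 * (k + 1) - 1 + 1 = 2 * (k + 1) by omega,
    show 2 * (k + 1) - 2 * (k + 1) + 1 = 1 by omega,
    show 2 * (k + 1) - (k + 1 + 1) + 1 = k + 1 by omega,
    show 2 * (k + 1) - (k + 1) + 1 = k + 1 + 1 by omega]
  ring

theorem hhPhi_hhSigma_hhPhi (v : Fin (2 * (k + 1) + 1) → F)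
    (hw : hhPhi k a v (Fin.last _) ≠ 0) :
    hhPhi k a (hhSigma k (hhPhi k a v)) = hhSigma k v := by
  funext i
  induction i using Fin.lastCases with
  | last =>
    have hN : hhPhiNumerator k a v ≠ 0 := (div_ne_zero_iff.mp (by rwa [← hhPhi_last])).1
    rw [hhPhi_last, hhPhiNumerator_hhSigma_hhPhi, hhSigma_eq_comp_rev, hhSigma_eq_comp_rev]
    simp only [Function.comp_apply, Fin.rev_zero, Fin.rev_last, hhPhi_last, div_div_cancel₀ hN]
  | cast i =>
    simp only [hhPhi_castSucc, hhSigma_eq_comp_rev, Function.comp_apply, Fin.rev_succ,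
      Fin.rev_castSucc]

end

theorem hhPhi_reversible {F : Type*} [Field F] (k : ℕ) (a : F)
    (v : Fin (2 * (k + 1) + 1) → F)
    (hw : hhPhi k a v ⟨2 * (k + 1), by omega⟩ ≠ 0) :
    hhSigma k (hhPhi k a (hhSigma k (hhPhi k a v))) = v := by
  rw [hhPhi_hhSigma_hhPhi k a v hw, hhSigma_involutive k v]
end

section
/- For the k=1 recurrence x_{n+3} x_n = x_{n+2} x_{n+1} + a(x_{n+1} + x_{n+2}) on nonzero terms, the 3×3 discrete Wronskian determinant δ_n = det [[x_n, x_{n+2}, x_{n+4}], [x_{n+1}, x_{n+3}, x_{n+5}], [x_{n+2}, x_{n+4}, x_{n+6}]] satisfies δ_{n+1} = δ_n for all n, i.e. δ_n is independent of n. -/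
open Matrix

/-!
Two consecutive instances of the recurrence combine to
`x (n+3) * (x n + x (n+2) + a) = x (n+1) * (x (n+2) + x (n+4) + a)`, so the ratio
`(x n + x (n+2) + a) / x (n+1)` is `2`-periodic. Hence the rows `(x m, x (m+2), x (m+4))` of the
Wronskian obey one inhomogeneous linear recurrence `r (m+2) = c • r (m+1) - r m - a • 1`, with a
coefficient `c` constant along each row, and for such rows the determinant of three consecutive
rows equals `-a` times the determinant of the first two of them with the all-ones row.
-/

theorem Matrix.det_of_rows_eq_of_linear_recurrence {R : Type*} [CommRing R]
    (u v w z : Fin 3 → R) (a c d : R)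
    (hw : w = c • v - u - a • 1) (hz : z = d • w - v - a • 1) :
    det (of ![v, w, z]) = det (of ![u, v, w]) := by
  subst hw hz
  simp only [det_fin_three, of_apply, Matrix.cons_val, Pi.sub_apply, Pi.smul_apply,
    Pi.one_apply, smul_eq_mul]
  ring

section LinearCoeff

variable {F : Type*} [Field F] {a : F} {x : ℤ → F}

def linearCoeff (a : F) (x : ℤ → F) (n : ℤ) : F := (x n + x (n + 2) + a) / x (n + 1)

theorem mul_add_add_eq_mul_add_add
    (hrec : ∀ n : ℤ, x (n + 3) * x n = x (n + 2) * x (n + 1) + a * (x (n + 1) + x (n + 2)))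
    (n : ℤ) : x (n + 3) * (x n + x (n + 2) + a) = x (n + 1) * (x (n + 2) + x (n + 4) + a) := by
  have h := hrec (n + 1)
  simp only [add_assoc, Int.reduceAdd] at h
  linear_combination hrec n - h

theorem linearCoeff_add_two (hnz : ∀ n, x n ≠ 0)
    (hrec : ∀ n : ℤ, x (n + 3) * x n = x (n + 2) * x (n + 1) + a * (x (n + 1) + x (n + 2)))
    (n : ℤ) : linearCoeff a x (n + 2) = linearCoeff a x n := by
  rw [linearCoeff, linearCoeff, div_eq_div_iff (hnz _) (hnz _)]
  simp only [add_assoc, Int.reduceAdd]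
  linear_combination (mul_add_add_eq_mul_add_add hrec n).symm

theorem linearCoeff_add_four (hnz : ∀ n, x n ≠ 0)
    (hrec : ∀ n : ℤ, x (n + 3) * x n = x (n + 2) * x (n + 1) + a * (x (n + 1) + x (n + 2)))
    (n : ℤ) : linearCoeff a x (n + 4) = linearCoeff a x n := by
  rw [show n + 4 = n + 2 + 2 by ring, linearCoeff_add_two hnz hrec, linearCoeff_add_two hnz hrec]

theorem eq_linearCoeff_mul_sub (hnz : ∀ n, x n ≠ 0) (n : ℤ) :
    x (n + 2) = linearCoeff a x n * x (n + 1) - x n - a := by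
  rw [linearCoeff, div_mul_cancel₀ _ (hnz _)]
  ring

theorem wronskianRow_add_two (hnz : ∀ n, x n ≠ 0)
    (hrec : ∀ n : ℤ, x (n + 3) * x n = x (n + 2) * x (n + 1) + a * (x (n + 1) + x (n + 2)))
    (m : ℤ) :
    ![x (m + 2), x (m + 4), x (m + 6)] =
      linearCoeff a x m • ![x (m + 1), x (m + 3), x (m + 5)] - ![x m, x (m + 2), x (m + 4)] -
        a • 1 := by
  ext j
  fin_cases j
  · simpa using eq_linearCoeff_mul_sub hnz m
  · have := eq_linearCoeff_mul_sub (a := a) hnz (m + 2)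
    simp only [add_assoc, Int.reduceAdd, linearCoeff_add_two hnz hrec] at this
    simpa using this
  · have := eq_linearCoeff_mul_sub (a := a) hnz (m + 4)
    simp only [add_assoc, Int.reduceAdd, linearCoeff_add_four hnz hrec] at this
    simpa using this

end LinearCoeff

theorem heiho_wronskian_constant_k1 {F : Type*} [Field F] (a : F)
    (x : ℤ → F) (hnz : ∀ n, x n ≠ 0)
    (hrec : ∀ n : ℤ, x (n + 3) * x n = x (n + 2) * x (n + 1) + a * (x (n + 1) + x (n + 2))) :
    ∀ n : ℤ,
      Matrix.det !![x (n + 1), x (n + 3), x (n + 5);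
                    x (n + 2), x (n + 4), x (n + 6);
                    x (n + 3), x (n + 5), x (n + 7)] =
      Matrix.det !![x n,       x (n + 2), x (n + 4);
                    x (n + 1), x (n + 3), x (n + 5);
                    x (n + 2), x (n + 4), x (n + 6)] := by
  intro n
  have hnext := wronskianRow_add_two hnz hrec (n + 1)
  simp only [add_assoc, Int.reduceAdd] at hnext
  exact det_of_rows_eq_of_linear_recurrence _ _ _ _ a _ _ (wronskianRow_add_two hnz hrec n) hnext
end

section
/- For a sequence satisfying x_{n+2k+1} x_n = x_{n+2k} x_{n+1} + a(x_{n+k} + x_{n+k+1}) for all n (all terms nonzero), the determinant δ_n of the 3×3 matrix with entries x_{n+i+2kj} for 0 ≤ i, j ≤ 2 satisfies δ_{n+k} = δ_n for all n. -/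
/-!
With `D y m = y m y (m+2k+1) - y (m+2k) y (m+1)` and `s m = x m + x (m+1)` the recurrence reads
`D x m = a s (m+k)`. Desnanot–Jacobi condensation on the centre entry turns `δ n · x (n+2k+1)` into a
`2 × 2` determinant of such minors, hence into `a² D s (n+k)`. Multiplying `D s m` by `x (m+1)` or by
`x (m+2k+1)` writes it as a combination of `D x m` and `D x (m+1)`; after substituting the recurrence
this gives `x (m+k+1) D s (m+k) = x (m+2k+1) D s m`, and cancelling the nonzero terms of `x` gives
`δ (n+k) = δ n`.
-/

section Casoratian

variable {R : Type*} [CommRing R]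

def casoratian (y : ℤ → R) (p m : ℤ) : R :=
  y m * y (m + p + 1) - y (m + p) * y (m + 1)

def pairSum (y : ℤ → R) (m : ℤ) : R :=
  y m + y (m + 1)

theorem det_shift_mul_center (y : ℤ → R) (p n : ℤ) :
    Matrix.det !![y n,       y (n + p),     y (n + 2 * p);
                  y (n + 1), y (n + p + 1), y (n + 2 * p + 1);
                  y (n + 2), y (n + p + 2), y (n + 2 * p + 2)] * y (n + p + 1) =
      casoratian y p n * casoratian y p (n + p + 1) -
        casoratian y p (n + p) * casoratian y p (n + 1) := by
  simp only [Matrix.det_fin_three, casoratian, Matrix.of_apply, Matrix.cons_val',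
    Matrix.cons_val_zero, Matrix.cons_val_one, Matrix.cons_val_two, Matrix.empty_val',
    Matrix.cons_val_fin_one, Matrix.head_cons, Matrix.tail_cons, Matrix.head_fin_const]
  ring_nf

theorem mul_casoratian_pairSum_left (y : ℤ → R) (p m : ℤ) :
    y (m + 1) * casoratian (pairSum y) p m =
      casoratian y p m * pairSum y (m + 1) + casoratian y p (m + 1) * pairSum y m := by
  simp only [casoratian, pairSum]
  ring_nf

theorem mul_casoratian_pairSum_right (y : ℤ → R) (p m : ℤ) :
    y (m + p + 1) * casoratian (pairSum y) p m =
      casoratian y p m * pairSum y (m + p + 1) + casoratian y p (m + 1) * pairSum y (m + p) := by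
  simp only [casoratian, pairSum]
  ring_nf

section Recurrence

variable {x : ℤ → R} {k : ℤ} {a : R}
  (hrec : ∀ m, casoratian x (2 * k) m = a * pairSum x (m + k))
include hrec

theorem det_mul_eq_sq_mul_casoratian_pairSum (n : ℤ) :
    Matrix.det !![x n,       x (n + 2 * k),     x (n + 4 * k);
                  x (n + 1), x (n + 2 * k + 1), x (n + 4 * k + 1);
                  x (n + 2), x (n + 2 * k + 2), x (n + 4 * k + 2)] * x (n + 2 * k + 1) =
      a ^ 2 * casoratian (pairSum x) (2 * k) (n + k) := by
  have h4 : n + 4 * k = n + 2 * (2 * k) := by ring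
  rw [h4, det_shift_mul_center, hrec, hrec, hrec, hrec]
  simp only [casoratian]
  ring_nf

theorem mul_casoratian_pairSum_shift (m : ℤ) :
    x (m + k + 1) * casoratian (pairSum x) (2 * k) (m + k) =
      x (m + 2 * k + 1) * casoratian (pairSum x) (2 * k) m := by
  rw [mul_casoratian_pairSum_left, mul_casoratian_pairSum_right, hrec, hrec, hrec, hrec]
  ring_nf

end Recurrence

end Casoratian

theorem heiho_wronskian_k_invariant_general {F : Type*} [Field F] (k : ℕ) (a : F)
    (x : ℤ → F) (hnz : ∀ n, x n ≠ 0)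
    (hrec : ∀ n : ℤ, x (n + 2 * k + 1) * x n =
      x (n + 2 * k) * x (n + 1) + a * (x (n + k) + x (n + k + 1)))
    (δ : ℤ → F)
    (hδ : ∀ n : ℤ, δ n =
      Matrix.det !![x n,       x (n + 2 * k),     x (n + 4 * k);
                    x (n + 1), x (n + 2 * k + 1), x (n + 4 * k + 1);
                    x (n + 2), x (n + 2 * k + 2), x (n + 4 * k + 2)]) :
    ∀ n : ℤ, δ (n + k) = δ n := by
  have hcas : ∀ m, casoratian x (2 * k) m = a * pairSum x (m + k) := fun m => by
    simp only [casoratian, pairSum]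
    linear_combination hrec m
  have hdet : ∀ m, δ m * x (m + 2 * k + 1) = a ^ 2 * casoratian (pairSum x) (2 * k) (m + k) :=
    fun m => by rw [hδ, det_mul_eq_sq_mul_casoratian_pairSum hcas]
  intro n
  have h2 : n + k + k = n + 2 * k := by ring
  have h3 : n + k + 2 * k + 1 = n + 3 * k + 1 := by ring
  have hdet_n := hdet n
  have hdet_nk := hdet (n + k)
  have hshift := mul_casoratian_pairSum_shift hcas (n + k)
  rw [h2, h3] at hdet_nk hshift
  refine mul_right_cancel₀ (mul_ne_zero (hnz (n + 2 * k + 1)) (hnz (n + 3 * k + 1))) ?_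
  linear_combination x (n + 2 * k + 1) * hdet_nk + a ^ 2 * hshift - x (n + 3 * k + 1) * hdet_n

theorem heiho_wronskian_k_invariant {F : Type*} [Field F] (k : ℕ) (hk : 0 < k) (a : F)
    (x : ℤ → F) (hnz : ∀ n, x n ≠ 0)
    (hrec : ∀ n : ℤ, x (n + 2 * k + 1) * x n =
      x (n + 2 * k) * x (n + 1) + a * (x (n + k) + x (n + k + 1)))
    (δ : ℤ → F)
    (hδ : ∀ n : ℤ, δ n =
      Matrix.det !![x n,       x (n + 2 * k),     x (n + 4 * k);
                    x (n + 1), x (n + 2 * k + 1), x (n + 4 * k + 1);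
                    x (n + 2), x (n + 2 * k + 2), x (n + 4 * k + 2)]) :
    ∀ n : ℤ, δ (n + k) = δ n :=
  heiho_wronskian_k_invariant_general k a x hnz hrec δ hδ
end

section
/- Suppose (x_n) satisfies the recurrence x_{n+2k+1} x_n = x_{n+2k} x_{n+1} + a(x_{n+k} + x_{n+k+1}) for all n, with all terms nonzero, and suppose the determinant δ_n of the 3×3 Wronskian matrix [[x_n, x_{n+2k}, x_{n+4k}], [x_{n+1}, x_{n+2k+1}, x_{n+4k+1}], [x_{n+2}, x_{n+2k+2}, x_{n+4k+2}]] satisfies δ_{n+2k} = δ_{n+2k+1} = δ_n = δ_{n+1} (which follows from δ being k-periodic). Then the 4×4 determinant det [[x_{n+i+2kj}]]_{0≤i,j≤3} vanishes for every n, provided the 2×2 minor x_{n+2k+1} x_{n+4k+2} - x_{n+4k+1} x_{n+2k+2} is nonzero. -/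
lemma dodgson4 {R : Type*} [CommRing R]
    (a00 a01 a02 a03 a10 a11 a12 a13 a20 a21 a22 a23 a30 a31 a32 a33 : R) :
    Matrix.det !![a00,a01,a02,a03; a10,a11,a12,a13; a20,a21,a22,a23; a30,a31,a32,a33] *
      (a11*a22 - a12*a21) =
    Matrix.det !![a00,a01,a02; a10,a11,a12; a20,a21,a22] *
      Matrix.det !![a11,a12,a13; a21,a22,a23; a31,a32,a33] -
    Matrix.det !![a01,a02,a03; a11,a12,a13; a21,a22,a23] *
      Matrix.det !![a10,a11,a12; a20,a21,a22; a30,a31,a32] := by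
  simp [show (4:ℕ)=3+1 from rfl, Matrix.det_succ_row_zero, Matrix.det_fin_three,
    Fin.sum_univ_succ, Matrix.submatrix_apply,
    show ((1:Fin 4).succAbove 2) = 3 from rfl, show ((2:Fin 4).succAbove 2) = 3 from rfl,
    show (Fin.castSucc 2 : Fin 4) = 2 from rfl, show ((3:Fin 4).succAbove 2) = 2 from rfl]
  ring

theorem heiho_wronskian4_vanishes {F : Type*} [Field F] (k : ℕ) (hk : 0 < k) (a : F)
    (x : ℤ → F) (hnz : ∀ n, x n ≠ 0)
    (hrec : ∀ n : ℤ, x (n + 2 * k + 1) * x n =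
      x (n + 2 * k) * x (n + 1) + a * (x (n + k) + x (n + k + 1)))
    (δ : ℤ → F)
    (hδ : ∀ n : ℤ, δ n =
      Matrix.det !![x n,       x (n + 2 * k),     x (n + 4 * k);
                    x (n + 1), x (n + 2 * k + 1), x (n + 4 * k + 1);
                    x (n + 2), x (n + 2 * k + 2), x (n + 4 * k + 2)])
    (hper : ∀ n : ℤ, δ (n + 2 * k) = δ (n + 2 * k + 1) ∧ δ (n + 2 * k + 1) = δ n ∧
      δ n = δ (n + 1)) :
    ∀ n : ℤ, x (n + 2 * k + 1) * x (n + 4 * k + 2) - x (n + 4 * k + 1) * x (n + 2 * k + 2) ≠ 0 →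
      Matrix.det !![x n,       x (n + 2 * k),     x (n + 4 * k),     x (n + 6 * k);
                    x (n + 1), x (n + 2 * k + 1), x (n + 4 * k + 1), x (n + 6 * k + 1);
                    x (n + 2), x (n + 2 * k + 2), x (n + 4 * k + 2), x (n + 6 * k + 2);
                    x (n + 3), x (n + 2 * k + 3), x (n + 4 * k + 3), x (n + 6 * k + 3)] = 0 := by
  intro n hc
  have h1 : δ n = Matrix.det !![x n, x (n + 2*k), x (n + 4*k);
      x (n+1), x (n + 2*k + 1), x (n + 4*k + 1);
      x (n+2), x (n + 2*k + 2), x (n + 4*k + 2)] := hδ n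
  have h2 : δ (n+1) = Matrix.det !![x (n+1), x (n + 2*k + 1), x (n + 4*k + 1);
      x (n+2), x (n + 2*k + 2), x (n + 4*k + 2);
      x (n+3), x (n + 2*k + 3), x (n + 4*k + 3)] := by
    rw [hδ]; ring_nf
  have h3 : δ (n+2*k) = Matrix.det !![x (n + 2*k), x (n + 4*k), x (n + 6*k);
      x (n + 2*k + 1), x (n + 4*k + 1), x (n + 6*k + 1);
      x (n + 2*k + 2), x (n + 4*k + 2), x (n + 6*k + 2)] := by
    rw [hδ]; ring_nf
  have h4 : δ (n+2*k+1) = Matrix.det !![x (n + 2*k + 1), x (n + 4*k + 1), x (n + 6*k + 1);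
      x (n + 2*k + 2), x (n + 4*k + 2), x (n + 6*k + 2);
      x (n + 2*k + 3), x (n + 4*k + 3), x (n + 6*k + 3)] := by
    rw [hδ]; ring_nf
  have key := dodgson4 (x n) (x (n + 2*k)) (x (n + 4*k)) (x (n + 6*k))
    (x (n+1)) (x (n + 2*k + 1)) (x (n + 4*k + 1)) (x (n + 6*k + 1))
    (x (n+2)) (x (n + 2*k + 2)) (x (n + 4*k + 2)) (x (n + 6*k + 2))
    (x (n+3)) (x (n + 2*k + 3)) (x (n + 4*k + 3)) (x (n + 6*k + 3))
  rw [← h1, ← h2, ← h3, ← h4] at key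
  obtain ⟨p1, p2, p3⟩ := hper n
  have : δ n * δ (n+2*k+1) - δ (n+2*k) * δ (n+1) = 0 := by
    rw [p1, p2, ← p3]; ring
  rw [this] at key
  exact (mul_eq_zero.mp key).resolve_right hc
end

section
/- Let (x_n) be a sequence satisfying x_{n+3} x_n = x_{n+2} x_{n+1} + a(x_{n+1} + x_{n+2}) for all n with all terms nonzero, and suppose the 3×3 Wronskian determinants δ_n (with column spacing 2) are all nonzero. Then there exist constants K1 and K2 (independent of n) such that x_{n+6} - K1 x_{n+4} + K2 x_{n+2} - x_n = 0 for all n. -/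
/-!
The quantity `J n = (x n + x (n+2) + a) (x (n+1) + x (n+3) + a) / (x (n+1) x (n+2))` is
conserved: `J (n+1) = J n` is the difference of two consecutive instances of the recurrence,
multiplied by `x (n+2) (x (n+1) + x (n+3) + a)`. Clearing the denominator of `J (n+2)`, four
consecutive instances of the recurrence give `x (n+6) - x n = (J - 1) (x (n+4) - x (n+2))`,
so `K1 = K2 = J - 1`.
-/

section

variable {F : Type*} [Field F] {a : F} {x : ℤ → F}

def recurrenceInvariant (a : F) (x : ℤ → F) (n : ℤ) : F :=
  (x n + x (n + 2) + a) * (x (n + 1) + x (n + 3) + a) / (x (n + 1) * x (n + 2))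

theorem recurrenceInvariant_succ (hnz : ∀ n, x n ≠ 0)
    (hrec : ∀ n : ℤ, x (n + 3) * x n = x (n + 2) * x (n + 1) + a * (x (n + 1) + x (n + 2)))
    (n : ℤ) : recurrenceInvariant a x (n + 1) = recurrenceInvariant a x n := by
  have h₀ := hrec n
  have h₁ := hrec (n + 1)
  simp only [add_assoc, Int.reduceAdd] at h₁
  simp only [recurrenceInvariant, add_assoc, Int.reduceAdd]
  rw [div_eq_div_iff (mul_ne_zero (hnz _) (hnz _)) (mul_ne_zero (hnz _) (hnz _))]
  linear_combination (x (n + 1) + x (n + 3) + a) * x (n + 2) * (h₁ - h₀)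

theorem recurrenceInvariant_eq_recurrenceInvariant_zero (hnz : ∀ n, x n ≠ 0)
    (hrec : ∀ n : ℤ, x (n + 3) * x n = x (n + 2) * x (n + 1) + a * (x (n + 1) + x (n + 2)))
    (n : ℤ) : recurrenceInvariant a x n = recurrenceInvariant a x 0 := by
  have hper : Function.Periodic (recurrenceInvariant a x) 1 := recurrenceInvariant_succ hnz hrec
  simpa using hper.int_mul_eq n

theorem sub_eq_recurrenceInvariant_sub_one_mul (hnz : ∀ n, x n ≠ 0)
    (hrec : ∀ n : ℤ, x (n + 3) * x n = x (n + 2) * x (n + 1) + a * (x (n + 1) + x (n + 2)))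
    (n : ℤ) :
    x (n + 6) - x n = (recurrenceInvariant a x (n + 2) - 1) * (x (n + 4) - x (n + 2)) := by
  have h₀ := hrec n
  have h₁ := hrec (n + 1)
  have h₂ := hrec (n + 2)
  have h₃ := hrec (n + 3)
  simp only [add_assoc, Int.reduceAdd] at h₁ h₂ h₃
  have hJ : recurrenceInvariant a x (n + 2) * (x (n + 3) * x (n + 4))
      = (x (n + 2) + x (n + 4) + a) * (x (n + 3) + x (n + 5) + a) := by
    simp only [recurrenceInvariant, add_assoc, Int.reduceAdd]
    exact div_mul_cancel₀ _ (mul_ne_zero (hnz _) (hnz _))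
  apply mul_right_cancel₀ (mul_ne_zero (hnz (n + 3)) (hnz (n + 4)))
  linear_combination x (n + 4) * (h₃ - h₂ + h₁ - h₀) + (x (n + 2) + x (n + 4) + a) * (h₂ - h₁)
    + (x (n + 2) - x (n + 4)) * hJ

end

theorem heiho_linearizable_k1_general {F : Type*} [Field F] (a : F)
    (x : ℤ → F) (hnz : ∀ n, x n ≠ 0)
    (hrec : ∀ n : ℤ, x (n + 3) * x n = x (n + 2) * x (n + 1) + a * (x (n + 1) + x (n + 2))) :
    ∃ K1 K2 : F, ∀ n : ℤ, x (n + 6) - K1 * x (n + 4) + K2 * x (n + 2) - x n = 0 := by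
  refine ⟨recurrenceInvariant a x 0 - 1, recurrenceInvariant a x 0 - 1, fun n => ?_⟩
  rw [← recurrenceInvariant_eq_recurrenceInvariant_zero hnz hrec (n + 2)]
  linear_combination sub_eq_recurrenceInvariant_sub_one_mul hnz hrec n

theorem heiho_linearizable_k1 {F : Type*} [Field F] (a : F)
    (x : ℤ → F) (hnz : ∀ n, x n ≠ 0)
    (hrec : ∀ n : ℤ, x (n + 3) * x n = x (n + 2) * x (n + 1) + a * (x (n + 1) + x (n + 2)))
    (hδ : ∀ n : ℤ,
      Matrix.det !![x n,       x (n + 2), x (n + 4);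
                    x (n + 1), x (n + 3), x (n + 5);
                    x (n + 2), x (n + 4), x (n + 6)] ≠ 0) :
    ∃ K1 K2 : F, ∀ n : ℤ, x (n + 6) - K1 * x (n + 4) + K2 * x (n + 2) - x n = 0 :=
  heiho_linearizable_k1_general a x hnz hrec
end

section
/- Let (x_n) be a sequence satisfying x_{n+6k} - K(x_{n+4k} - x_{n+2k}) - x_n = 0 for all n. Then the quantity K' = Σ_{j=0}^{2k-1} (x_{n+4k+j} - (K-1) x_{n+2k+j} + x_{n+j}) is independent of n. -/
theorem heiho_Kprime_conserved {F : Type*} [Field F] (k : ℕ) (hk : 0 < k) (K : F)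
    (x : ℤ → F)
    (hlin : ∀ n : ℤ, x (n + 6 * k) - K * (x (n + 4 * k) - x (n + 2 * k)) - x n = 0) :
    ∀ m n : ℤ,
      (∑ j ∈ Finset.range (2 * k),
        (x (m + 4 * k + j) - (K - 1) * x (m + 2 * k + j) + x (m + j))) =
      (∑ j ∈ Finset.range (2 * k),
        (x (n + 4 * k + j) - (K - 1) * x (n + 2 * k + j) + x (n + j))) := by
  set g : ℤ → F := fun n => x (n + 4 * k) - (K - 1) * x (n + 2 * k) + x n with hg
  set S : ℤ → F := fun m => ∑ j ∈ Finset.range (2 * k), g (m + j) with hS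
  have hsum : ∀ m : ℤ, (∑ j ∈ Finset.range (2 * k),
      (x (m + 4 * k + j) - (K - 1) * x (m + 2 * k + j) + x (m + j))) = S m := by
    intro m
    apply Finset.sum_congr rfl
    intro j _
    simp only [hg]
    have h1 : m + 4 * (k : ℤ) + j = m + j + 4 * k := by ring
    have h2 : m + 2 * (k : ℤ) + j = m + j + 2 * k := by ring
    rw [h1, h2]
  have hstep : ∀ m : ℤ, S (m + 1) = S m := by
    intro m
    have key : S (m + 1) = S m + g (m + 2 * k) - g m := by
      have e1 : ∀ j : ℕ, g (m + 1 + j) = g (m + ((j + 1 : ℕ) : ℤ)) := by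
        intro j; push_cast; ring_nf
      have e2 : (∑ j ∈ Finset.range (2 * k), g (m + ((j + 1 : ℕ) : ℤ)))
          = (∑ j ∈ Finset.range (2 * k + 1), g (m + j)) - g (m + (0 : ℕ)) := by
        rw [Finset.sum_range_succ' (fun j : ℕ => g (m + j)) (2 * k)]
        ring
      calc S (m + 1) = ∑ j ∈ Finset.range (2 * k), g (m + ((j + 1 : ℕ) : ℤ)) := by
            simp only [hS]; exact Finset.sum_congr rfl fun j _ => e1 j
        _ = (∑ j ∈ Finset.range (2 * k + 1), g (m + j)) - g (m + (0 : ℕ)) := e2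
        _ = S m + g (m + (2 * k : ℕ)) - g m := by
            rw [Finset.sum_range_succ]; simp [hS]
        _ = S m + g (m + 2 * k) - g m := by push_cast; ring_nf
    have hz : g (m + 2 * k) - g m = 0 := by
      simp only [hg]
      have h1 : m + 2 * (k : ℤ) + 4 * k = m + 6 * k := by ring
      have h2 : m + 2 * (k : ℤ) + 2 * k = m + 4 * k := by ring
      rw [h1, h2]
      linear_combination hlin m
    rw [key]
    linear_combination hz
  have hS0 : ∀ m : ℤ, S m = S 0 := by
    intro m
    induction m using Int.induction_on with
    | zero => rfl
    | succ i ih => rw [hstep i, ih]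
    | pred i ih => rw [← ih, ← hstep (-i - 1)]; norm_num
  intro m n
  rw [hsum m, hsum n, hS0 m, hS0 n]
end

section
/- For the recurrence x_{n+2k+1} x_n = x_{n+2k} x_{n+1} + a(x_{n+k} + x_{n+k+1}), the first k forward iterates beyond the initial data x_0, ..., x_{2k} are given by x_{2k+j} = x_0^{-1} x_j x_{2k} + a x_j Σ_{ℓ=1}^{j} (x_{ℓ-1} x_ℓ)^{-1}(x_{k+ℓ-1} + x_{k+ℓ}) for 1 ≤ j ≤ k. -/
theorem heiho_explicit_forward_iterates {F : Type*} [Field F] (k : ℕ) (hk : 0 < k) (a : F)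
    (x : ℕ → F) (hnz : ∀ n, x n ≠ 0)
    (hrec : ∀ n, x (n + 2 * k + 1) * x n =
      x (n + 2 * k) * x (n + 1) + a * (x (n + k) + x (n + k + 1))) :
    ∀ j, 1 ≤ j → j ≤ k →
      x (2 * k + j) = (x 0)⁻¹ * x j * x (2 * k)
        + a * x j * ∑ l ∈ Finset.Icc 1 j,
            (x (l - 1) * x l)⁻¹ * (x (k + l - 1) + x (k + l)) := by
  intro j hj1
  induction j, hj1 using Nat.le_induction with
  | base =>
    intro _
    have h0 := hrec 0
    simp only [zero_add] at h0
    have e : 2 * k + 1 = 2 * k + 1 := rfl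
    simp only [Finset.Icc_self, Finset.sum_singleton]
    norm_num
    have hx0 := hnz 0
    have hx1 := hnz 1
    field_simp
    linear_combination h0
  | succ j hj IH =>
    intro hjk
    have IH' := IH (by omega)
    have hr := hrec j
    have e1 : j + 2 * k + 1 = 2 * k + (j + 1) := by ring
    have e2 : j + 2 * k = 2 * k + j := by ring
    have e5 : j + k = k + j := by ring
    rw [e1, e2, e5] at hr
    rw [Finset.sum_Icc_succ_top (by omega : 1 ≤ j + 1)]
    have e3 : j + 1 - 1 = j := rfl
    have e4 : k + (j + 1) - 1 = k + j := by omega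
    rw [e3, e4, IH'] at *
    rw [IH'] at hr
    have hx0 := hnz 0
    have hxj := hnz j
    have hxj1 := hnz (j+1)
    have e7 : k + (j + 1) = k + j + 1 := by ring
    rw [e7]
    field_simp at hr ⊢
    linear_combination hr
end

section
/- The nonlinear recurrence x_{n+3} x_n = x_{n+2} x_{n+1} + a(x_{n+1} + x_{n+2}) has the Laurent property: treating x_0, x_1, x_2 as indeterminates, every forward iterate x_n (n ≥ 3) lies in the Laurent polynomial ring ℤ[a][x_0^{±1}, x_1^{±1}, x_2^{±1}]. -/
/-!
The quantity `κ = conservedNum a x₀ x₁ x₂ / (x₀ x₁ x₂)` is conserved by the recurrence, and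
the iterates satisfy the linear recurrence `x_{n+6} = κ (x_{n+4} - x_{n+2}) + x_n`. Since `κ`
and `x₀, …, x₅` lie in `ℤ[a][x₀^{±1}, x₁^{±1}, x₂^{±1}]`, so does every iterate. The divisions
in the recurrence are by nonzero elements because every iterate is a subtraction-free rational
expression in `a, x₀, x₁, x₂`, hence a quotient of polynomials that are positive at
`a = x₀ = x₁ = x₂ = 1`.
-/

open MvPolynomial

section Conserved

variable {R : Type*} [CommRing R]

def conservedNum (a u v w : R) : R :=
  v * (u ^ 2 + u * w + w ^ 2) + a * (u + w) ^ 2 + 2 * a * v * (u + w) + a ^ 2 * (u + v + w)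

theorem conservedNum_mul_eq {a u v w z : R} (hz : z * u = v * w + a * (v + w)) :
    conservedNum a u v w * z = conservedNum a v w z * u := by
  unfold conservedNum
  linear_combination (u * v - w * z + a * (u - z)) * hz

/-- For five consecutive iterates `y, u, v, w, z = x_{n+1}, …, x_{n+5}` the right-hand side is
`u v w (x_{n+6} - x_n)`, so this identity is the linear recurrence. -/
theorem conservedNum_mul_sub {a y u v w z : R} (hy : y * w = u * v + a * (u + v))
    (hz : z * u = v * w + a * (v + w)) :
    conservedNum a u v w * (w - u) = u * w * ((w * z + a * (w + z)) - (y * u + a * (y + u))) := by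
  unfold conservedNum
  linear_combination (u ^ 2 + a * u) * hy - (w ^ 2 + a * w) * hz

theorem conservedNum_mem {S : Type*} [SetLike S R] [SubringClass S R] {s : S} {a u v w : R}
    (ha : a ∈ s) (hu : u ∈ s) (hv : v ∈ s) (hw : w ∈ s) : conservedNum a u v w ∈ s := by
  unfold conservedNum
  aesop

end Conserved

section Sequence

variable {K : Type*} [Field K] {a : K} {x : ℕ → K}

theorem conserved_eq_conserved_zero (hx : ∀ n, x n ≠ 0)
    (hrec : ∀ n, x (n + 3) * x n = x (n + 2) * x (n + 1) + a * (x (n + 1) + x (n + 2))) (n : ℕ) :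
    conservedNum a (x n) (x (n + 1)) (x (n + 2)) / (x n * x (n + 1) * x (n + 2)) =
      conservedNum a (x 0) (x 1) (x 2) / (x 0 * x 1 * x 2) := by
  induction n with
  | zero => rfl
  | succ n ih =>
    rw [← ih, div_eq_div_iff (by simp [hx]) (by simp [hx])]
    simp only [add_assoc, Nat.reduceAdd]
    have step := conservedNum_mul_eq (a := a) (u := x n) (v := x (n + 1)) (w := x (n + 2))
      (z := x (n + 3)) (by linear_combination hrec n)
    linear_combination -(x (n + 1) * x (n + 2)) * step

theorem linear_recurrence (hx : ∀ n, x n ≠ 0)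
    (hrec : ∀ n, x (n + 3) * x n = x (n + 2) * x (n + 1) + a * (x (n + 1) + x (n + 2))) (n : ℕ) :
    x (n + 6) = conservedNum a (x 0) (x 1) (x 2) / (x 0 * x 1 * x 2) * (x (n + 4) - x (n + 2))
      + x n := by
  have key := conservedNum_mul_sub (a := a) (y := x (n + 1)) (u := x (n + 2)) (v := x (n + 3))
    (w := x (n + 4)) (z := x (n + 5)) (by linear_combination hrec (n + 1))
    (by linear_combination hrec (n + 2))
  rw [← conserved_eq_conserved_zero hx hrec (n + 2), div_mul_eq_mul_div,
    eq_comm, ← eq_sub_iff_add_eq, div_eq_iff (by simp [hx])]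
  simp only [add_assoc, Nat.reduceAdd]
  linear_combination key - x (n + 2) * x (n + 4) * (hrec (n + 3) - hrec n)

theorem mem_of_initial_mem {S : Type*} [SetLike S K] [SubringClass S K] {s : S}
    (hx : ∀ n, x n ≠ 0)
    (hrec : ∀ n, x (n + 3) * x n = x (n + 2) * x (n + 1) + a * (x (n + 1) + x (n + 2)))
    (ha : a ∈ s) (hmem : ∀ n < 3, x n ∈ s) (hinv : ∀ n < 3, (x n)⁻¹ ∈ s) (n : ℕ) : x n ∈ s := by
  have hκ : conservedNum a (x 0) (x 1) (x 2) / (x 0 * x 1 * x 2) ∈ s := by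
    rw [div_eq_mul_inv, mul_inv, mul_inv]
    exact mul_mem (conservedNum_mem ha (hmem 0 (by norm_num)) (hmem 1 (by norm_num))
      (hmem 2 (by norm_num))) (mul_mem (mul_mem (hinv 0 (by norm_num)) (hinv 1 (by norm_num)))
      (hinv 2 (by norm_num)))
  induction n using Nat.strong_induction_on with
  | _ n ih =>
    obtain hn | ⟨m, hm, rfl⟩ | ⟨m, rfl⟩ :
        n < 3 ∨ (∃ m < 3, n = m + 3) ∨ ∃ m, n = m + 6 := by
      rcases lt_or_ge n 3 with h | h
      · exact .inl h
      rcases lt_or_ge n 6 with h' | h'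
      · exact .inr (.inl ⟨n - 3, by omega, by omega⟩)
      · exact .inr (.inr ⟨n - 6, by omega⟩)
    · exact hmem n hn
    · rw [(eq_mul_inv_iff_mul_eq₀ (hx m)).2 (hrec m)]
      exact mul_mem (add_mem (mul_mem (ih _ (by omega)) (ih _ (by omega)))
        (mul_mem ha (add_mem (ih _ (by omega)) (ih _ (by omega))))) (hinv m hm)
    · rw [linear_recurrence hx hrec]
      exact add_mem (mul_mem hκ (sub_mem (ih _ (by omega)) (ih _ (by omega)))) (ih _ (by omega))

end Sequence

section PosQuotient

variable {A K S : Type*} [CommRing A] [Field K] [Algebra A K] [CommSemiring S] [PartialOrder S]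
  (f : A →+* S)

def IsPosQuotient (y : K) : Prop :=
  ∃ p q : A, 0 < f p ∧ 0 < f q ∧ y = algebraMap A K p / algebraMap A K q

variable {f}

theorem algebraMap_ne_zero_of_pos [IsFractionRing A K] {p : A} (hp : 0 < f p) :
    algebraMap A K p ≠ 0 := by
  rw [ne_eq, IsFractionRing.to_map_eq_zero_iff]
  rintro rfl
  simp at hp

theorem IsPosQuotient.ne_zero [IsFractionRing A K] {y : K} (hy : IsPosQuotient f y) : y ≠ 0 := by
  obtain ⟨p, q, hp, hq, rfl⟩ := hy
  exact div_ne_zero (algebraMap_ne_zero_of_pos hp) (algebraMap_ne_zero_of_pos hq)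

variable [IsStrictOrderedRing S]

namespace IsPosQuotient

theorem of_algebraMap {p : A} (hp : 0 < f p) : IsPosQuotient f (algebraMap A K p) :=
  ⟨p, 1, hp, by simp, by simp⟩

theorem add [IsFractionRing A K] {y z : K} (hy : IsPosQuotient f y) (hz : IsPosQuotient f z) :
    IsPosQuotient f (y + z) := by
  obtain ⟨p, q, hp, hq, rfl⟩ := hy
  obtain ⟨p', q', hp', hq', rfl⟩ := hz
  refine ⟨p * q' + q * p', q * q', by simp only [map_add, map_mul]; positivity,
    by simp only [map_mul]; positivity, ?_⟩
  rw [div_add_div _ _ (algebraMap_ne_zero_of_pos hq) (algebraMap_ne_zero_of_pos hq')]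
  simp only [map_add, map_mul]

theorem mul {y z : K} (hy : IsPosQuotient f y) (hz : IsPosQuotient f z) :
    IsPosQuotient f (y * z) := by
  obtain ⟨p, q, hp, hq, rfl⟩ := hy
  obtain ⟨p', q', hp', hq', rfl⟩ := hz
  refine ⟨p * p', q * q', by simp only [map_mul]; positivity, by simp only [map_mul]; positivity,
    ?_⟩
  rw [div_mul_div_comm, map_mul, map_mul]

theorem div {y z : K} (hy : IsPosQuotient f y) (hz : IsPosQuotient f z) :
    IsPosQuotient f (y / z) := by
  obtain ⟨p, q, hp, hq, rfl⟩ := hy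
  obtain ⟨p', q', hp', hq', rfl⟩ := hz
  refine ⟨p * q', q * p', by simp only [map_mul]; positivity, by simp only [map_mul]; positivity,
    ?_⟩
  rw [div_div_div_eq, map_mul, map_mul]

theorem of_recurrence [IsFractionRing A K] {a : K} {x : ℕ → K} (ha : IsPosQuotient f a)
    (hinit : ∀ n < 3, IsPosQuotient f (x n))
    (hrec : ∀ n, x (n + 3) = (x (n + 2) * x (n + 1) + a * (x (n + 1) + x (n + 2))) / x n)
    (n : ℕ) : IsPosQuotient f (x n) := by
  induction n using Nat.strong_induction_on with
  | _ n ih =>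
    rcases lt_or_ge n 3 with hn | hn
    · exact hinit n hn
    obtain ⟨m, rfl⟩ := Nat.exists_eq_add_of_le' hn
    rw [hrec]
    exact (((ih _ (by omega)).mul (ih _ (by omega))).add
      (ha.mul ((ih _ (by omega)).add (ih _ (by omega))))).div (ih _ (by omega))

end IsPosQuotient

end PosQuotient

section Away

variable {A : Type*} (K : Type*) [CommRing A] [IsDomain A] [Field K] [Algebra A K]
  [IsFractionRing A K] {e : A} (he : e ≠ 0)

noncomputable abbrev awaySubalgebra : Subalgebra A K :=
  Localization.subalgebra.ofField K (Submonoid.powers e)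
    (powers_le_nonZeroDivisors_of_noZeroDivisors he)

variable {K}

theorem inv_algebraMap_mem_awaySubalgebra {d : A} (hd : d ∣ e) :
    (algebraMap A K d)⁻¹ ∈ awaySubalgebra K he := by
  obtain ⟨c, rfl⟩ := hd
  refine ⟨c, d * c, Submonoid.mem_powers _, ?_⟩
  have hc : algebraMap A K c ≠ 0 := by
    rw [ne_eq, IsFractionRing.to_map_eq_zero_iff]
    exact right_ne_zero_of_mul he
  rw [map_mul, mul_inv, mul_left_comm, mul_inv_cancel₀ hc, mul_one]

theorem exists_mul_pow_eq_of_mem_awaySubalgebra {y : K} (hy : y ∈ awaySubalgebra K he) :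
    ∃ (p : A) (m : ℕ), y * algebraMap A K e ^ m = algebraMap A K p := by
  obtain ⟨p, _, ⟨m, rfl⟩, rfl⟩ := hy
  have he' : algebraMap A K e ≠ 0 := by
    rwa [ne_eq, IsFractionRing.to_map_eq_zero_iff]
  exact ⟨p, m, by rw [map_pow, inv_mul_cancel_right₀ (pow_ne_zero m he')]⟩

end Away

/-- The Laurent property for the `k = 1` Heideman–Hogan recurrence
`x_{n+3} x_n = x_{n+2} x_{n+1} + a (x_{n+1} + x_{n+2})`: working in the field of
fractions of `ℤ[a, x_0, x_1, x_2]` (variable `0` is `a`, variables `1, 2, 3`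
are `x_0, x_1, x_2`), every iterate is a polynomial in `a, x_0, x_1, x_2` with
integer coefficients divided by a monomial in `x_0, x_1, x_2`. -/
theorem heiho_laurent_property_k1
    (x : ℕ → FractionRing (MvPolynomial (Fin 4) ℤ))
    (h0 : x 0 = algebraMap (MvPolynomial (Fin 4) ℤ) _ (X 1))
    (h1 : x 1 = algebraMap (MvPolynomial (Fin 4) ℤ) _ (X 2))
    (h2 : x 2 = algebraMap (MvPolynomial (Fin 4) ℤ) _ (X 3))
    (hrec : ∀ n, x (n + 3) =
      (x (n + 2) * x (n + 1)
        + algebraMap (MvPolynomial (Fin 4) ℤ) _ (X 0) * (x (n + 1) + x (n + 2))) / x n) :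
    ∀ n, ∃ (p : MvPolynomial (Fin 4) ℤ) (i j l : ℕ),
      x n * algebraMap (MvPolynomial (Fin 4) ℤ) _ (X 1 ^ i * X 2 ^ j * X 3 ^ l) =
        algebraMap (MvPolynomial (Fin 4) ℤ) _ p := by
  have hinit : ∀ n < 3, ∃ i, (X i : MvPolynomial (Fin 4) ℤ) ∣ X 1 * X 2 * X 3 ∧
      x n = algebraMap (MvPolynomial (Fin 4) ℤ) _ (X i) := by
    intro n hn
    interval_cases n
    exacts [⟨1, (dvd_mul_right _ _).mul_right _, h0⟩, ⟨2, (dvd_mul_left _ _).mul_right _, h1⟩,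
      ⟨3, dvd_mul_left _ _, h2⟩]
  have hpos : ∀ n, IsPosQuotient (eval fun _ ↦ (1 : ℤ)) (x n) :=
    IsPosQuotient.of_recurrence (.of_algebraMap (by simp))
      (fun n hn ↦ by obtain ⟨i, -, hi⟩ := hinit n hn; exact hi ▸ .of_algebraMap (by simp)) hrec
  have hx n : x n ≠ 0 := (hpos n).ne_zero
  have hE : (X 1 * X 2 * X 3 : MvPolynomial (Fin 4) ℤ) ≠ 0 := by simp [X_ne_zero]
  have hmem n : x n ∈ awaySubalgebra _ hE := by
    refine mem_of_initial_mem hx (fun n ↦ by rw [hrec n, div_mul_cancel₀ _ (hx n)])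
      (Subalgebra.algebraMap_mem _ _) (fun n hn ↦ ?_) (fun n hn ↦ ?_) n <;>
      obtain ⟨i, hi, hxi⟩ := hinit n hn <;> rw [hxi]
    · exact Subalgebra.algebraMap_mem _ _
    · exact inv_algebraMap_mem_awaySubalgebra hE hi
  intro n
  obtain ⟨p, m, hp⟩ := exists_mul_pow_eq_of_mem_awaySubalgebra hE (hmem n)
  exact ⟨p, m, m, m, by rwa [← mul_pow, ← mul_pow, map_pow]⟩
end

section
/- Suppose a sequence (x_n) satisfies x_{n+6k} - K(x_{n+4k} - x_{n+2k}) - x_n = 0 for all n, where K - 1 = 2cos(2kθ) with sin(2kθ) ≠ 0 and K ≠ -1 (i.e. the characteristic roots are distinct). Then there exist 2k-periodic sequences a_n, b_n, φ_n such that x_n = a_n + b_n cos(nθ + φ_n) for all n. -/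
open Real

lemma trig_c (α t : ℝ) :
    Real.cos (t+3*α) - (1 + 2*Real.cos α)*(Real.cos (t+2*α) - Real.cos (t+α)) - Real.cos t = 0 := by
  rw [show t+3*α = (t+α)+α+α from by ring, show t+2*α = (t+α)+α from by ring]
  simp only [Real.cos_add, Real.sin_add]
  linear_combination (Real.cos t * (1 - Real.cos α) + Real.sin t * Real.sin α) *
    (Real.sin_sq_add_cos_sq α)

lemma trig_s (α t : ℝ) :
    Real.sin (t+3*α) - (1 + 2*Real.cos α)*(Real.sin (t+2*α) - Real.sin (t+α)) - Real.sin t = 0 := by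
  rw [show t+3*α = (t+α)+α+α from by ring, show t+2*α = (t+α)+α from by ring]
  simp only [Real.cos_add, Real.sin_add]
  linear_combination (Real.sin t * (1 - Real.cos α) - Real.cos t * Real.sin α) *
    (Real.sin_sq_add_cos_sq α)

lemma solve3 (α : ℝ) (hs : Real.sin α ≠ 0) (y : ℤ → ℝ)
    (hy : ∀ m : ℤ, y (m+3) - (1 + 2*Real.cos α) * (y (m+2) - y (m+1)) - y m = 0) :
    ∃ a c d : ℝ, ∀ m : ℤ, y m = a + c * Real.cos (α * m) + d * Real.sin (α * m) := by
  have hpy : Real.sin α^2 + Real.cos α^2 = 1 := Real.sin_sq_add_cos_sq α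
  have hc1 : Real.cos α ≠ 1 := by
    intro h; apply hs
    nlinarith [sq_nonneg (Real.sin α)]
  set cα := Real.cos α with hcα
  set sα := Real.sin α with hsα
  set u : ℝ := y 1 - y 0 with hu
  set v : ℝ := y 2 - y 1 with hv
  set c : ℝ := (v - (2*cα-1)*u)/(2*(cα-1)) with hc
  set d : ℝ := (u - c*(cα-1))/sα with hd
  set a : ℝ := y 0 - c with ha
  refine ⟨a, c, d, ?_⟩
  set F : ℤ → ℝ := fun m => a + c * Real.cos (α * m) + d * Real.sin (α * m) with hF
  suffices key : ∀ m : ℤ, y m = F m ∧ y (m+1) = F (m+1) ∧ y (m+2) = F (m+2) by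
    intro m; exact (key m).1
  have hds : d * sα = u - c*(cα-1) := by
    rw [hd]; field_simp
  have hne : (2:ℝ)*(cα-1) ≠ 0 := by
    intro h; apply hc1; linarith
  have hcc : 2*(cα-1)*c = v - (2*cα-1)*u := by
    rw [hc, mul_comm, div_mul_cancel₀ _ hne]
  have b0 : y 0 = F 0 := by
    simp only [hF]; push_cast
    rw [mul_zero, Real.cos_zero, Real.sin_zero]; rw [ha]; ring
  have b1 : y 1 = F 1 := by
    simp only [hF]; push_cast
    rw [mul_one, ← hcα, ← hsα]
    have : y 1 = y 0 + u := by rw [hu]; ring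
    rw [this, ha]; linear_combination -hds
  have b2 : y 2 = F 2 := by
    simp only [hF]; push_cast
    rw [show α * 2 = 2 * α from by ring, Real.cos_two_mul, Real.sin_two_mul, ← hcα, ← hsα]
    have : y 2 = y 0 + u + v := by rw [hu, hv]; ring
    rw [this, ha]; linear_combination -2*cα*hds - hcc
  have hFrec : ∀ m : ℤ, F (m+3) - (1 + 2*cα) * (F (m+2) - F (m+1)) - F m = 0 := by
    intro m
    simp only [hF]; push_cast
    have e3 : α * ((m:ℝ)+3) = α*m + 3*α := by ring
    have e2 : α * ((m:ℝ)+2) = α*m + 2*α := by ring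
    have e1 : α * ((m:ℝ)+1) = α*m + 1*α := by ring
    rw [e3, e2, e1, show α*(m:ℝ) + 1*α = α*m + α from by ring]
    have := trig_c α (α*m)
    have := trig_s α (α*m)
    rw [hcα]
    linear_combination c * trig_c α (α*m) + d * trig_s α (α*m)
  intro m
  induction m using Int.induction_on with
  | zero => exact ⟨b0, by norm_num [b1], by norm_num [b2]⟩
  | succ i ih =>
    obtain ⟨h0, h1, h2⟩ := ih
    refine ⟨h1, by rw [show (i:ℤ)+1+1 = i+2 from by ring]; exact h2, ?_⟩
    rw [show (i:ℤ)+1+2 = i+3 from by ring]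
    have hy' := hy i
    have hF' := hFrec i
    have : y (i+3) = (1+2*cα)*(y (i+2) - y (i+1)) + y i := by linarith
    rw [this, h0, h1, h2]; linarith
  | pred i ih =>
    obtain ⟨h0, h1, h2⟩ := ih
    refine ⟨?_, by rw [show (-(i:ℤ)-1)+1 = -i from by ring]; exact h0,
      by rw [show (-(i:ℤ)-1)+2 = -i+1 from by ring]; exact h1⟩
    have hy' := hy (-i-1)
    have hF' := hFrec (-i-1)
    rw [show (-(i:ℤ)-1)+3 = -i+2 from by ring, show (-(i:ℤ)-1)+2 = -i+1 from by ring,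
      show (-(i:ℤ)-1)+1 = -i from by ring] at hy' hF'
    rw [h0, h1, h2] at hy'
    linarith

lemma amp (c d : ℝ) : ∃ B φ : ℝ, ∀ t : ℝ,
    c * Real.cos t + d * Real.sin t = B * Real.cos (t + φ) := by
  by_cases h : (⟨c, -d⟩ : ℂ) = 0
  · rw [Complex.ext_iff] at h
    simp only [Complex.zero_re, Complex.zero_im] at h
    refine ⟨0, 0, fun t => ?_⟩
    have hc : c = 0 := h.1
    have hd : d = 0 := by have := h.2; simpa [neg_eq_zero] using this
    simp [hc, hd]
  · refine ⟨‖(⟨c, -d⟩ : ℂ)‖, Complex.arg ⟨c, -d⟩, fun t => ?_⟩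
    have habs : ‖(⟨c, -d⟩ : ℂ)‖ ≠ 0 := by
      exact norm_ne_zero_iff.mpr h
    have hc := Complex.cos_arg h
    have hs := Complex.sin_arg (⟨c, -d⟩ : ℂ)
    rw [Real.cos_add, hc, hs]
    field_simp
    ring

theorem heiho_trig_solution (k : ℕ) (hk : 0 < k) (K θ : ℝ)
    (hKθ : K - 1 = 2 * Real.cos (2 * k * θ))
    (hsin : Real.sin (2 * k * θ) ≠ 0)
    (hK : K ≠ -1)
    (x : ℤ → ℝ)
    (hlin : ∀ n : ℤ, x (n + 6 * k) - K * (x (n + 4 * k) - x (n + 2 * k)) - x n = 0) :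
    ∃ A B Φ : ℤ → ℝ,
      (∀ n : ℤ, A (n + 2 * k) = A n ∧ B (n + 2 * k) = B n ∧ Φ (n + 2 * k) = Φ n) ∧
      (∀ n : ℤ, x n = A n + B n * Real.cos (n * θ + Φ n)) := by
  set α : ℝ := 2 * k * θ with hα
  have hKval : K = 1 + 2 * Real.cos α := by rw [hα]; linarith
  have H : ∀ r : ℤ, ∃ a c d : ℝ, ∀ m : ℤ,
      x (r + 2*k*m) = a + c * Real.cos (α * m) + d * Real.sin (α * m) := by
    intro r
    apply solve3 α hsin (fun m => x (r + 2*k*m))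
    intro m
    have h := hlin (r + 2*k*m)
    rw [← hKval]
    have e6 : r + 2*(k:ℤ)*m + 6*k = r + 2*k*(m+3) := by ring
    have e4 : r + 2*(k:ℤ)*m + 4*k = r + 2*k*(m+2) := by ring
    have e2 : r + 2*(k:ℤ)*m + 2*k = r + 2*k*(m+1) := by ring
    rw [e6, e4, e2] at h
    exact h
  choose a c d hacd using H
  have H2 : ∀ r : ℤ, ∃ B φ : ℝ, ∀ t : ℝ,
      c r * Real.cos t + d r * Real.sin t = B * Real.cos (t + φ) := fun r => amp (c r) (d r)
  choose B0 φ0 hB0 using H2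
  have hk2 : (0:ℤ) < 2*k := by positivity
  refine ⟨fun n => a (n % (2*k)), fun n => B0 (n % (2*k)),
    fun n => φ0 (n % (2*k)) - ((n % (2*k) : ℤ) : ℝ) * θ, ?_, ?_⟩
  · intro n
    have hmod : (n + 2*(k:ℤ)) % (2*k) = n % (2*k) := by
      simpa using Int.add_mul_emod_self_left (a := n) (b := 2*(k:ℤ)) (c := 1)
    refine ⟨by simp only [hmod], by simp only [hmod], by simp only [hmod]⟩
  · intro n
    set r : ℤ := n % (2*k) with hr
    set q : ℤ := n / (2*k) with hq
    have hn : r + 2*k*q = n := by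
      rw [hr, hq]; exact Int.emod_add_mul_ediv n (2*k)
    have h1 : x n = a r + (c r * Real.cos (α * q) + d r * Real.sin (α * q)) := by
      rw [← hn]; linarith [hacd r q]
    rw [h1, hB0 r (α * q)]
    have harg : α * q = n * θ - r * θ := by
      rw [hα]
      have : ((r:ℝ) + 2*k*q) = n := by exact_mod_cast congrArg (Int.cast : ℤ → ℝ) hn
      linear_combination θ * this
    rw [harg]
    simp only [← hr]
    ring_nf
end

section
/- Given the relation x_{n+6k} - K(x_{n+4k} - x_{n+2k}) - x_n = 0 for all n, and setting t = (K-1)/2, the subsequences satisfy: for each residue j mod 2k, x_{2km+j} = q_j + r_j T_m(t) + s_j U_m(t) for all integers m ≥ -1, where T_m, U_m are Chebyshev polynomials of the first and second kind and (q_j, r_j, s_j) is determined from (x_{2k+j}, x_j, x_{-2k+j}) by the linear system q_j + r_j T_1(t) + s_j U_1(t) = x_{2k+j}, q_j + r_j T_0(t) + s_j U_0(t) = x_j, q_j + r_j T_{-1}(t) + s_j U_{-1}(t) = x_{-2k+j}, provided t ≠ 0 and t ≠ 1. -/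
theorem heiho_chebyshev_solution {F : Type*} [Field F] [CharZero F]
    (k : ℕ) (hk : 0 < k) (K t : F)
    (ht : t = (K - 1) / 2) (ht0 : t ≠ 0) (ht1 : t ≠ 1)
    (x : ℤ → F)
    (hlin : ∀ n : ℤ, x (n + 6 * k) = K * (x (n + 4 * k) - x (n + 2 * k)) + x n)
    (T U : ℤ → F)
    (hT0 : T 0 = 1) (hT1 : T 1 = t)
    (hTrec : ∀ m : ℤ, T (m + 1) = 2 * t * T m - T (m - 1))
    (hU0 : U 0 = 1) (hU1 : U 1 = 2 * t)
    (hUrec : ∀ m : ℤ, U (m + 1) = 2 * t * U m - U (m - 1)) :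
    ∀ j : ℤ, 0 ≤ j → j < 2 * k →
      ∃ q r s : F,
        (q + r * T 1 + s * U 1 = x (2 * k + j) ∧
         q + r * T 0 + s * U 0 = x j ∧
         q + r * T (-1) + s * U (-1) = x (j - 2 * k)) ∧
        ∀ m : ℤ, -1 ≤ m → x (2 * k * m + j) = q + r * T m + s * U m := by
  have hK : K = 2 * t + 1 := by
    rw [ht]; field_simp; ring
  have h2t : (2 : F) * t ≠ 0 := by
    simp [ht0]
  have h1t : (1 : F) - t ≠ 0 := sub_ne_zero.mpr (Ne.symm ht1)
  have hTm1 : T (-1) = t := by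
    have h := hTrec 0
    simp only [zero_add, zero_sub, hT0, hT1, mul_one] at h
    linear_combination h
  have hUm1 : U (-1) = 0 := by
    have h := hUrec 0
    simp only [zero_add, zero_sub, hU0, hU1, mul_one] at h
    linear_combination h
  intro j _ _
  set s : F := (x (2 * k + j) - x (j - 2 * k)) / (2 * t) with hs
  set r : F := (x j - s - x (j - 2 * k)) / (1 - t) with hr
  set q : F := x (j - 2 * k) - r * t with hq
  have e1 : q + r * T 1 + s * U 1 = x (2 * k + j) := by
    rw [hT1, hU1, hq, hs]; field_simp; ring
  have e0 : q + r * T 0 + s * U 0 = x j := by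
    rw [hT0, hU0, hq]
    have : r * (1 - t) = x j - s - x (j - 2 * k) := by
      rw [hr]; field_simp
    linear_combination this
  have em1 : q + r * T (-1) + s * U (-1) = x (j - 2 * k) := by
    rw [hTm1, hUm1, hq]; ring
  refine ⟨q, r, s, ⟨e1, e0, em1⟩, ?_⟩
  -- key : ∀ n : ℕ, statement holds at n-1, n, n+1
  have key : ∀ n : ℕ, (x (2 * k * ((n : ℤ) - 1) + j) = q + r * T ((n : ℤ) - 1) + s * U ((n : ℤ) - 1))
      ∧ (x (2 * k * (n : ℤ) + j) = q + r * T (n : ℤ) + s * U (n : ℤ))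
      ∧ (x (2 * k * ((n : ℤ) + 1) + j) = q + r * T ((n : ℤ) + 1) + s * U ((n : ℤ) + 1)) := by
    intro n
    induction n with
    | zero =>
      refine ⟨?_, ?_, ?_⟩
      · rw [show 2 * (k : ℤ) * (((0 : ℕ) : ℤ) - 1) + j = j - 2 * k by push_cast; ring]
        exact em1.symm
      · rw [show 2 * (k : ℤ) * ((0 : ℕ) : ℤ) + j = j by push_cast; ring]
        exact e0.symm
      · rw [show 2 * (k : ℤ) * (((0 : ℕ) : ℤ) + 1) + j = 2 * k + j by push_cast; ring]
        exact e1.symm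
    | succ n ih =>
      obtain ⟨ihm, ih0, ih1⟩ := ih
      have hstep : x (2 * k * ((n : ℤ) + 2) + j)
          = q + r * T ((n : ℤ) + 2) + s * U ((n : ℤ) + 2) := by
        have h := hlin (2 * k * ((n : ℤ) - 1) + j)
        have a6 : 2 * (k : ℤ) * ((n : ℤ) - 1) + j + 6 * k = 2 * k * ((n : ℤ) + 2) + j := by ring
        have a4 : 2 * (k : ℤ) * ((n : ℤ) - 1) + j + 4 * k = 2 * k * ((n : ℤ) + 1) + j := by ring
        have a2 : 2 * (k : ℤ) * ((n : ℤ) - 1) + j + 2 * k = 2 * k * (n : ℤ) + j := by ring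
        rw [a6, a4, a2, ih1, ih0, ihm] at h
        have hT2 : T ((n : ℤ) + 2) = 2 * t * T ((n : ℤ) + 1) - T (n : ℤ) := by
          have := hTrec ((n : ℤ) + 1)
          simpa [add_sub_cancel_right, add_assoc] using this
        have hU2 : U ((n : ℤ) + 2) = 2 * t * U ((n : ℤ) + 1) - U (n : ℤ) := by
          have := hUrec ((n : ℤ) + 1)
          simpa [add_sub_cancel_right, add_assoc] using this
        have hT1' : T ((n : ℤ) + 1) = 2 * t * T (n : ℤ) - T ((n : ℤ) - 1) := hTrec n
        have hU1' : U ((n : ℤ) + 1) = 2 * t * U (n : ℤ) - U ((n : ℤ) - 1) := hUrec n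
        rw [h, hT2, hU2, hK]
        linear_combination (r + s) * hT1' * 0 + r * hT1' + s * hU1'
      constructor
      · have : ((n : ℤ) + 1) - 1 = (n : ℤ) := by ring
        rw [show ((n + 1 : ℕ) : ℤ) = (n : ℤ) + 1 by push_cast; ring, this]
        exact ih0
      constructor
      · rw [show ((n + 1 : ℕ) : ℤ) = (n : ℤ) + 1 by push_cast; ring]
        exact ih1
      · rw [show ((n + 1 : ℕ) : ℤ) = (n : ℤ) + 1 by push_cast; ring,
          show ((n : ℤ) + 1) + 1 = (n : ℤ) + 2 by ring]
        exact hstep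
  intro m hm
  obtain ⟨n, hn⟩ : ∃ n : ℕ, m = (n : ℤ) - 1 := by
    refine ⟨(m + 1).toNat, ?_⟩
    rw [Int.toNat_of_nonneg (by linarith)]; ring
  rw [hn]
  exact (key n).1
end

section
/- For the k=1 case: define φ(x_0, x_1, x_2) = (x_1, x_2, (x_1 x_2 + a(x_1 + x_2))/x_0) and σ(x_0, x_1, x_2) = (x_2, x_1, x_0). Then σ ∘ φ ∘ σ ∘ φ = id on the open set where all compositions are defined. -/
/-- The `k = 1` Heideman–Hogan map on triples. -/
def hhPhi3 {F : Type*} [Field F] (a : F) (p : F × F × F) : F × F × F :=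
  (p.2.1, p.2.2, (p.2.1 * p.2.2 + a * (p.2.1 + p.2.2)) / p.1)

/-- The reversal involution on triples. -/
def hhSigma3 {F : Type*} [Field F] (p : F × F × F) : F × F × F :=
  (p.2.2, p.2.1, p.1)

theorem hhPhi3_reversible_general {F : Type*} [Field F] (a : F) (p : F × F × F)
    (hw : (hhPhi3 a p).2.2 ≠ 0) :
    hhSigma3 (hhPhi3 a (hhSigma3 (hhPhi3 a p))) = p := by
  obtain ⟨x0, x1, x2⟩ := p
  have hN : x1 * x2 + a * (x1 + x2) ≠ 0 := (div_ne_zero_iff.mp hw).1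
  -- the numerator `N` is symmetric in `x1, x2`, so the second step computes `N / (N / x0)`
  simp only [hhPhi3, hhSigma3, mul_comm x2 x1, add_comm x2 x1, div_div_cancel₀ hN]

theorem hhPhi3_reversible {F : Type*} [Field F] (a : F) (p : F × F × F)
    (h0 : p.1 ≠ 0) (h1 : p.2.1 ≠ 0) (h2 : p.2.2 ≠ 0)
    (hw : (hhPhi3 a p).2.2 ≠ 0) :
    hhSigma3 (hhPhi3 a (hhSigma3 (hhPhi3 a p))) = p :=
  hhPhi3_reversible_general a p hw
end
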